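/- arXiv:2012.00235 — 3 statements merged into one kernel-verified Lean document; each statement's English description precedes it below -/
import Mathlib

section
/- For any basic probability assignment m on the power set of a finite frame Θ, the fractal-based basic probability assignment m_F defined by m_F(F) = m(F)/(2^|F|-1) + Σ_{F ⊊ G} m(G)/(2^|G|-1) (sum over proper supersets G of F) sums to 1 over all nonempty subsets F of Θ. -/
open Finset Real Filter

/-- A basic probability assignment on the power set of a finite frame `Θ`. -/
noncomputable def IsBPA {Θ : Type*} [Fintype Θ] [DecidableEq Θ] (m : Finset Θ → ℝ) : Prop :=
  m ∅ = 0 ∧ (∀ F, 0 ≤ m F) ∧ ∑ F : Finset Θ, m F = 1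

/-- The fractal-based basic probability assignment:
`m_F(F) = m(F)/(2^|F|-1) + Σ_{F ⊊ G} m(G)/(2^|G|-1)`. -/
noncomputable def mF {Θ : Type*} [Fintype Θ] [DecidableEq Θ] (m : Finset Θ → ℝ) (F : Finset Θ) : ℝ :=
  m F / ((2 : ℝ) ^ F.card - 1) +
    ∑ G ∈ Finset.univ.filter (fun G : Finset Θ => F ⊂ G), m G / ((2 : ℝ) ^ G.card - 1)

/-- Fractal-based belief entropy: Shannon entropy of `m_F` over nonempty subsets. -/
noncomputable def EFB {Θ : Type*} [Fintype Θ] [DecidableEq Θ] (m : Finset Θ → ℝ) : ℝ :=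
  ∑ F ∈ Finset.univ.filter (fun F : Finset Θ => F.Nonempty), Real.negMulLog (mF m F)

/-- Pignistic probability transformation: `BetP(θ) = Σ_{θ ∈ F} m(F)/|F|`. -/
noncomputable def BetP {Θ : Type*} [Fintype Θ] [DecidableEq Θ] (m : Finset Θ → ℝ) (θ : Θ) : ℝ :=
  ∑ F ∈ Finset.univ.filter (fun F : Finset Θ => θ ∈ F), m F / (F.card : ℝ)

/-- Plausibility of a singleton: `Pl(θ) = Σ_{θ ∈ F} m(F)`. -/
noncomputable def Pl {Θ : Type*} [Fintype Θ] [DecidableEq Θ] (m : Finset Θ → ℝ) (θ : Θ) : ℝ :=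
  ∑ F ∈ Finset.univ.filter (fun F : Finset Θ => θ ∈ F), m F

/-! Each nonempty focal set `G` spreads its mass `m G` evenly over its `2 ^ |G| - 1` nonempty
subsets, and `mF m F` collects the shares of all `G ⊇ F`. Exchanging the two sums hands each `G`
its mass back, and these masses add up to `1`. -/

theorem Finset.sum_Ioi_sum_Ici {α M : Type*} [PartialOrder α] [Fintype α] [LocallyFiniteOrder α]
    [LocallyFiniteOrderTop α] [AddCommMonoid M] (a : α) (f : α → M) :
    ∑ x ∈ Ioi a, ∑ y ∈ Ici x, f y = ∑ y, #(Ioc a y) • f y := by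
  simp_rw [← sum_const]
  exact sum_comm' fun x y => by simp [and_comm]

theorem mF_eq_sum_Ici {Θ : Type*} [Fintype Θ] [DecidableEq Θ] (m : Finset Θ → ℝ) (F : Finset Θ) :
    mF m F = ∑ G ∈ Ici F, m G / (2 ^ #G - 1) := by
  rw [mF, ← add_sum_Ioi_eq_sum_Ici, ← filter_lt_eq_Ioi]

theorem fbbpa_sum_one_general {Θ : Type*} [Fintype Θ] [DecidableEq Θ]
    (m : Finset Θ → ℝ) (hm : IsBPA m) :
    ∑ F ∈ Finset.univ.filter (fun F : Finset Θ => F.Nonempty), mF m F = 1 := by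
  obtain ⟨hm_empty, -, hm_sum⟩ := hm
  have h_nonempty : univ.filter (fun F : Finset Θ => F.Nonempty) = Ioi ∅ := by
    ext; simp
  rw [h_nonempty, ← hm_sum]
  simp_rw [mF_eq_sum_Ici]
  rw [sum_Ioi_sum_Ici]
  refine sum_congr rfl fun G _ => ?_
  rw [card_Ioc_finset G.empty_subset, card_empty, Nat.sub_zero, nsmul_eq_mul]
  rcases G.eq_empty_or_nonempty with rfl | hG
  · simp [hm_empty]
  · have h_pos : (1 : ℝ) < 2 ^ #G := one_lt_pow₀ one_lt_two hG.card_pos.ne'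
    rw [Nat.cast_sub Nat.one_le_two_pow, Nat.cast_pow, Nat.cast_ofNat, Nat.cast_one]
    exact mul_div_cancel₀ _ (sub_ne_zero.mpr h_pos.ne')

theorem fbbpa_sum_one {Θ : Type*} [Fintype Θ] [DecidableEq Θ] [Nonempty Θ]
    (m : Finset Θ → ℝ) (hm : IsBPA m) :
    ∑ F ∈ Finset.univ.filter (fun F : Finset Θ => F.Nonempty), mF m F = 1 :=
  fbbpa_sum_one_general m hm
end

section
/- For any basic probability assignment m, the fractal-based BPA satisfies m_F(F) ≥ 0 for all nonempty F, so (m_F(F))_{∅≠F⊆Θ} is a probability distribution on the nonempty subsets of Θ. -/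
open Finset Real Filter

/-! Each mass `m G` is shared equally among the `2 ^ |G| - 1` nonempty subsets of `G`, and
`mF m F` collects the shares that `F` receives from its supersets. Summing over all nonempty `F`
therefore just redistributes the total mass, and every share is nonnegative. -/

lemma Finset.card_filter_nonempty_powerset {α : Type*} [DecidableEq α] (G : Finset α) :
    #(G.powerset.filter Finset.Nonempty) = 2 ^ #G - 1 := by
  have : G.powerset.filter Finset.Nonempty = G.powerset.erase ∅ := by
    ext F
    simp [nonempty_iff_ne_empty, and_comm]
  rw [this, card_erase_of_mem (empty_mem_powerset G), card_powerset]

section FractalBPA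

variable {Θ : Type*} [Fintype Θ] [DecidableEq Θ]

lemma mF_nonneg {m : Finset Θ → ℝ} (hm : ∀ G, 0 ≤ m G) (F : Finset Θ) : 0 ≤ mF m F := by
  have hden : ∀ G : Finset Θ, (0 : ℝ) ≤ 2 ^ #G - 1 :=
    fun G => sub_nonneg.2 (one_le_pow₀ one_le_two)
  exact add_nonneg (div_nonneg (hm F) (hden F))
    (sum_nonneg fun G _ => div_nonneg (hm G) (hden G))

lemma mF_eq_sum_superset (m : Finset Θ → ℝ) (F : Finset Θ) :
    mF m F = ∑ G ∈ univ.filter (F ⊆ ·), m G / ((2 : ℝ) ^ #G - 1) := by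
  have : univ.filter (F ⊆ ·) = insert F (univ.filter (F ⊂ ·)) := by
    ext G
    simpa only [mem_filter, mem_univ, true_and, mem_insert, eq_comm] using le_iff_eq_or_lt
  rw [this, sum_insert (by simp)]
  rfl

lemma sum_mF (m : Finset Θ → ℝ) :
    ∑ F ∈ univ.filter Finset.Nonempty, mF m F = ∑ G ∈ univ.filter Finset.Nonempty, m G := by
  set share : Finset Θ → ℝ := fun G => m G / ((2 : ℝ) ^ #G - 1)
  calc ∑ F ∈ univ.filter Finset.Nonempty, mF m F
      = ∑ F ∈ univ.filter Finset.Nonempty, ∑ G ∈ univ.filter (F ⊆ ·), share G :=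
        sum_congr rfl fun F _ => mF_eq_sum_superset m F
    _ = ∑ G, ∑ F ∈ G.powerset.filter Finset.Nonempty, share G :=
        sum_comm' fun F G => by simp [and_comm]
    _ = ∑ G, ((2 : ℝ) ^ #G - 1) * share G := by
        simp only [sum_const, card_filter_nonempty_powerset, nsmul_eq_mul,
          Nat.cast_sub Nat.one_le_two_pow, Nat.cast_pow, Nat.cast_ofNat, Nat.cast_one]
    _ = ∑ G ∈ univ.filter Finset.Nonempty, m G := by
        rw [sum_filter]
        refine sum_congr rfl fun G _ => ?_
        rcases G.eq_empty_or_nonempty with rfl | hG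
        · simp
        · have hden : (2 : ℝ) ^ #G - 1 ≠ 0 :=
            (sub_pos.2 (one_lt_pow₀ one_lt_two hG.card_ne_zero)).ne'
          rw [if_pos hG, mul_div_cancel₀ _ hden]

end FractalBPA

theorem fbbpa_isProbability_general {Θ : Type*} [Fintype Θ] [DecidableEq Θ]
    (m : Finset Θ → ℝ) (hm : IsBPA m) :
    (∀ F : Finset Θ, F.Nonempty → 0 ≤ mF m F) ∧
      ∑ F ∈ Finset.univ.filter (fun F : Finset Θ => F.Nonempty), mF m F = 1 := by
  obtain ⟨hm_empty, hm_nonneg, hm_sum⟩ := hm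
  refine ⟨fun F _ => mF_nonneg hm_nonneg F, ?_⟩
  rw [sum_mF, sum_filter_of_ne, hm_sum]
  rintro G - hG
  exact nonempty_iff_ne_empty.2 fun h => hG (h ▸ hm_empty)

theorem fbbpa_isProbability {Θ : Type*} [Fintype Θ] [DecidableEq Θ] [Nonempty Θ]
    (m : Finset Θ → ℝ) (hm : IsBPA m) :
    (∀ F : Finset Θ, F.Nonempty → 0 ≤ mF m F) ∧
      ∑ F ∈ Finset.univ.filter (fun F : Finset Θ => F.Nonempty), mF m F = 1 :=
  fbbpa_isProbability_general m hm
end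

section
/- Monotonicity under vacuous extension direction (special case): on a 2-element frame {a,b}, FB entropy of the BPA m_t = {m(a) = (1−t)/2, m(b) = (1−t)/2, m(ab) = t} is strictly increasing in t on [0,1], rising from log 2 at t = 0 to log 3 at t = 1. -/
open Finset Real Filter

/-- The family of BPAs `m_t` on the 2-element frame with
`m_t({a}) = m_t({b}) = (1-t)/2` and `m_t({a,b}) = t`. -/
noncomputable def mT (t : ℝ) : Finset (Fin 2) → ℝ := fun F =>
  if F = {0} then (1 - t) / 2
  else if F = {1} then (1 - t) / 2
  else if F = Finset.univ then t
  else 0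

/-
On the frame `{0, 1}` the fractal BPA only spreads the mass of `univ` equally over the three
nonempty subsets, so `EFB (mT t) = 2 η((3 - t)/6) + η(t/3)` with `η = negMulLog`. Its derivative
`(log ((3 - t)/6) - log (t/3)) / 3` is positive on `(0, 1)` because `t/3 < (3 - t)/6` there.
-/

lemma mF_fin_two_singleton (m : Finset (Fin 2) → ℝ) (i : Fin 2) :
    mF m {i} = m {i} + m univ / 3 := by
  have hsup : univ.filter (fun G : Finset (Fin 2) => {i} ⊂ G) = {univ} := by
    fin_cases i <;> decide
  rw [mF, hsup, sum_singleton, card_singleton, card_univ, Fintype.card_fin]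
  norm_num

lemma mF_fin_two_univ (m : Finset (Fin 2) → ℝ) : mF m univ = m univ / 3 := by
  have hsup : univ.filter (fun G : Finset (Fin 2) => univ ⊂ G) = ∅ := by decide
  rw [mF, hsup, sum_empty, card_univ, Fintype.card_fin]
  norm_num

lemma EFB_fin_two (m : Finset (Fin 2) → ℝ) :
    EFB m = negMulLog (m {0} + m univ / 3) + negMulLog (m {1} + m univ / 3) +
      negMulLog (m univ / 3) := by
  have hne : univ.filter (fun F : Finset (Fin 2) => F.Nonempty) = {{0}, {1}, univ} := by decide
  rw [EFB, hne, sum_insert (by decide), sum_insert (by decide), sum_singleton,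
    mF_fin_two_singleton, mF_fin_two_singleton, mF_fin_two_univ, add_assoc]

lemma EFB_mT (t : ℝ) : EFB (mT t) = 2 * negMulLog ((3 - t) / 6) + negMulLog (t / 3) := by
  have h0 : mT t {0} = (1 - t) / 2 := by simp [mT]
  have h1 : mT t {1} = (1 - t) / 2 := by simp [mT]
  have hu : mT t univ = t := by simp [mT, Finset.ext_iff]
  rw [EFB_fin_two, h0, h1, hu, show (1 - t) / 2 + t / 3 = (3 - t) / 6 by ring]
  ring

lemma hasDerivAt_EFB_mT {t : ℝ} (ht₀ : 0 < t) (ht₁ : t < 3) :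
    HasDerivAt (fun t => EFB (mT t)) ((log ((3 - t) / 6) - log (t / 3)) / 3) t := by
  simp only [EFB_mT]
  have hp : HasDerivAt (fun t : ℝ => (3 - t) / 6) (-1 / 6) t := by
    simpa using ((hasDerivAt_const t (3 : ℝ)).sub (hasDerivAt_id t)).div_const 6
  have hq : HasDerivAt (fun t : ℝ => t / 3) (1 / 3) t := (hasDerivAt_id t).div_const 3
  have hp' := ((hasDerivAt_negMulLog (by linarith : (3 - t) / 6 ≠ 0)).comp t hp).const_mul 2
  have hq' := (hasDerivAt_negMulLog (by positivity : t / 3 ≠ 0)).comp t hq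
  exact (hp'.add hq').congr_deriv (by ring)

lemma strictMonoOn_EFB_mT : StrictMonoOn (fun t => EFB (mT t)) (Set.Icc 0 1) := by
  refine strictMonoOn_of_deriv_pos (convex_Icc 0 1) (by simp only [EFB_mT]; fun_prop)
    fun t ht => ?_
  rw [interior_Icc] at ht
  obtain ⟨ht₀, ht₁⟩ := ht
  rw [(hasDerivAt_EFB_mT ht₀ (by linarith)).deriv]
  have : log (t / 3) < log ((3 - t) / 6) := log_lt_log (by positivity) (by linarith)
  linarith

theorem EFB_mT_strictMono :
    StrictMonoOn (fun t => EFB (mT t)) (Set.Icc (0 : ℝ) 1) ∧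
      EFB (mT 0) = Real.log 2 ∧ EFB (mT 1) = Real.log 3 := by
  refine ⟨strictMonoOn_EFB_mT, ?_, ?_⟩ <;>
    norm_num [EFB_mT, negMulLog, log_div, log_inv] <;> ring
end
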